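/- arXiv:1705.06551 — 2 statements merged into one kernel-verified Lean document; each statement's English description precedes it below -/
import Mathlib

section
/- Let Q : ℝⁿ → S^m be differentiable and ψ(x) := ‖P(Q(x))‖_F², where P is the projection onto the PSD cone. Then ψ is differentiable and ∇ψ(x) = 2 ∇Q(x)* P(Q(x)), where ∇Q(x)* denotes the adjoint of the derivative of Q at x. -/
/-!
Let `p`, `q` be the nearest points of `y`, `z` in a convex cone `K` of a real inner product
space. Testing the variational inequality `⟪z - q, w - q⟫ ≤ 0` at `w = 0` and `w = 2q` gives
`‖q‖² = ⟪z, q⟫`; with it, `‖y - p‖ ≤ ‖y - q‖` becomes `2⟪q, y - z⟫ ≤ ‖p‖² - ‖q‖²`. The same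
inequality with `y, z` swapped, together with firm nonexpansiveness `‖p - q‖² ≤ ⟪y - z, p - q⟫`,
bounds the error from above by `2‖y - z‖²`. So `‖p‖²` is differentiable along any differentiable
path `y = Q(x)` with derivative `2⟪q, DQ(x)·⟫`. Only the values of the projection on the path
enter, here on symmetric matrices, where the Frobenius inner product agrees with `finner`.
-/

open Matrix

attribute [local instance] Matrix.frobeniusSeminormedAddCommGroup
  Matrix.frobeniusNormedAddCommGroup Matrix.frobeniusNormedSpace

/-- The Jordan product `Y ∘ Z = (YZ + ZY)/2`. -/
noncomputable def jmul {m : ℕ} (Y Z : Matrix (Fin m) (Fin m) ℝ) : Matrix (Fin m) (Fin m) ℝ :=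
  (2⁻¹ : ℝ) • (Y * Z + Z * Y)

/-- The trace inner product `⟨Y, Z⟩ = tr (Y Z)`. -/
noncomputable def finner {m : ℕ} (Y Z : Matrix (Fin m) (Fin m) ℝ) : ℝ := (Y * Z).trace

/-- `P` is the nearest-point (Frobenius-norm) projection onto the cone of positive
semidefinite matrices, viewed on the space of real symmetric matrices. -/
def IsProjPSD {m : ℕ} (P : Matrix (Fin m) (Fin m) ℝ → Matrix (Fin m) (Fin m) ℝ) : Prop :=
  ∀ Z : Matrix (Fin m) (Fin m) ℝ, Z.IsSymm →
    (P Z).PosSemidef ∧ ∀ W : Matrix (Fin m) (Fin m) ℝ, W.PosSemidef → ‖Z - P Z‖ ≤ ‖Z - W‖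

open Asymptotics
open scoped RealInnerProductSpace Topology

section NearestPoint

variable {E : Type*} [NormedAddCommGroup E] [InnerProductSpace ℝ E]

def IsNearestPoint (K : Set E) (z p : E) : Prop :=
  p ∈ K ∧ ∀ w ∈ K, ‖z - p‖ ≤ ‖z - w‖

namespace IsNearestPoint

variable {K : Set E} {y z p q w : E}

theorem inner_sub_le_zero (hK : Convex ℝ K) (h : IsNearestPoint K z p) (hw : w ∈ K) :
    ⟪z - p, w - p⟫ ≤ 0 := by
  have : Nonempty K := ⟨⟨p, h.1⟩⟩
  have hbdd : BddBelow (Set.range fun w : K => ‖z - w‖) :=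
    ⟨0, Set.forall_mem_range.2 fun _ => norm_nonneg _⟩
  have hinf : ‖z - p‖ = ⨅ w : K, ‖z - w‖ :=
    le_antisymm (le_ciInf fun w => h.2 w w.2) (ciInf_le hbdd ⟨p, h.1⟩)
  exact (norm_eq_iInf_iff_real_inner_le_zero hK h.1).1 hinf w hw

theorem norm_sub_sq_le_inner (hK : Convex ℝ K) (hp : IsNearestPoint K y p)
    (hq : IsNearestPoint K z q) : ‖p - q‖ ^ 2 ≤ ⟪y - z, p - q⟫ := by
  have hy := hp.inner_sub_le_zero hK hq.1
  have hz := hq.inner_sub_le_zero hK hp.1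
  have hsplit : y - z = (y - p) - (z - q) + (p - q) := by abel
  rw [hsplit, inner_add_left, inner_sub_left, real_inner_self_eq_norm_sq]
  rw [← neg_sub p q, inner_neg_right] at hy
  linarith

theorem inner_sub_le_norm_sub_sq (hK : Convex ℝ K) (hp : IsNearestPoint K y p)
    (hq : IsNearestPoint K z q) : ⟪y - z, p - q⟫ ≤ ‖y - z‖ ^ 2 := by
  have hfirm := hp.norm_sub_sq_le_inner hK hq
  have hsq : 0 ≤ ‖(y - z) - (p - q)‖ ^ 2 := sq_nonneg _
  rw [norm_sub_sq_real] at hsq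
  linarith

variable {K : PointedCone ℝ E}

theorem inner_sub_self_eq_zero (h : IsNearestPoint K z p) : ⟪z - p, p⟫ = 0 := by
  have h0 := h.inner_sub_le_zero K.convex K.zero_mem
  have h2 := h.inner_sub_le_zero K.convex (K.add_mem h.1 h.1)
  rw [zero_sub, inner_neg_right] at h0
  rw [add_sub_cancel_right] at h2
  linarith

theorem norm_sq_eq_inner (h : IsNearestPoint K z p) : ‖p‖ ^ 2 = ⟪z, p⟫ := by
  have := h.inner_sub_self_eq_zero
  rw [inner_sub_left, real_inner_self_eq_norm_sq] at this
  linarith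

theorem two_inner_sub_le (hp : IsNearestPoint K y p) (hq : IsNearestPoint K z q) :
    2 * ⟪q, y - z⟫ ≤ ‖p‖ ^ 2 - ‖q‖ ^ 2 := by
  have hmin : ‖y - p‖ ^ 2 ≤ ‖y - q‖ ^ 2 := by gcongr; exact hp.2 q hq.1
  rw [norm_sub_sq_real, norm_sub_sq_real, ← hp.norm_sq_eq_inner] at hmin
  rw [inner_sub_right, real_inner_comm y, real_inner_comm z, ← hq.norm_sq_eq_inner]
  linarith

theorem abs_norm_sq_sub_sub_le (hp : IsNearestPoint K y p) (hq : IsNearestPoint K z q) :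
    |‖p‖ ^ 2 - ‖q‖ ^ 2 - 2 * ⟪q, y - z⟫| ≤ 2 * ‖y - z‖ ^ 2 := by
  have hlow := hp.two_inner_sub_le hq
  have hupp := hq.two_inner_sub_le hp
  have hfirm := hp.inner_sub_le_norm_sub_sq K.convex hq
  rw [← neg_sub y z, inner_neg_right] at hupp
  rw [inner_sub_right, real_inner_comm p, real_inner_comm q] at hfirm
  rw [abs_of_nonneg (by linarith)]
  linarith

end IsNearestPoint

theorem HasFDerivAt.norm_sq_of_isNearestPoint {F : Type*} [NormedAddCommGroup F]
    [NormedSpace ℝ F] {K : PointedCone ℝ E} {f g : F → E} {f' : F →L[ℝ] E} {x : F}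
    (hg : ∀ y, IsNearestPoint K (f y) (g y)) (hf : HasFDerivAt f f' x) :
    HasFDerivAt (fun y => ‖g y‖ ^ 2) ((2 : ℝ) • (innerSL ℝ (g x)).comp f') x := by
  have hsq : (fun y => ‖f y - f x‖ ^ 2) =o[𝓝 x] fun y => y - x :=
    (hf.isBigO_sub.norm_norm.pow 2).trans_isLittleO (isLittleO_pow_sub_sub x one_lt_two)
  have hrem : HasFDerivAt (fun y => ‖g y‖ ^ 2 - 2 * ⟪g x, f y⟫) (0 : F →L[ℝ] ℝ) x := by
    refine .of_isLittleO <| IsBigO.trans_isLittleO (.of_bound 2 <| .of_forall fun y => ?_) hsq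
    calc ‖(‖g y‖ ^ 2 - 2 * ⟪g x, f y⟫) - (‖g x‖ ^ 2 - 2 * ⟪g x, f x⟫) - (0 : F →L[ℝ] ℝ) (y - x)‖
        = |‖g y‖ ^ 2 - ‖g x‖ ^ 2 - 2 * ⟪g x, f y - f x⟫| := by
          rw [Real.norm_eq_abs, inner_sub_right, _root_.zero_apply]
          ring_nf
      _ ≤ 2 * ‖f y - f x‖ ^ 2 := (hg y).abs_norm_sq_sub_sub_le (hg x)
      _ = 2 * ‖‖f y - f x‖ ^ 2‖ := by rw [norm_pow, norm_norm]
  have hlin : HasFDerivAt (fun y => 2 * ⟪g x, f y⟫) ((2 : ℝ) • (innerSL ℝ (g x)).comp f') x :=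
    ((innerSL ℝ (g x)).hasFDerivAt.comp x hf).const_mul 2
  have hsum := hrem.add hlin
  rw [zero_add] at hsum
  exact hsum.congr_of_eventuallyEq (.of_forall fun y => (sub_add_cancel _ _).symm)

end NearestPoint

namespace Matrix

variable {m n : Type*} [Fintype m] [Fintype n]

@[reducible]
noncomputable def frobeniusInnerProductSpace : InnerProductSpace ℝ (Matrix m n ℝ) where
  inner A B := ∑ i, ∑ j, A i j * B i j
  norm_sq_eq_re_inner A := by
    rw [frobenius_norm_def, ← Real.sqrt_eq_rpow, Real.sq_sqrt (by positivity)]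
    simp [sq]
  conj_inner_symm A B := by simp [mul_comm]
  add_left A B C := by simp [add_mul, Finset.sum_add_distrib]
  smul_left A B r := by simp [Finset.mul_sum, mul_assoc]

def posSemidefCone (n : Type*) [Fintype n] : PointedCone ℝ (Matrix n n ℝ) where
  carrier := {A | A.PosSemidef}
  add_mem' := PosSemidef.add
  zero_mem' := PosSemidef.zero
  smul_mem' c _ hA := hA.smul c.2

end Matrix

attribute [local instance] Matrix.frobeniusInnerProductSpace

theorem Matrix.frobenius_inner_def {m n : Type*} [Fintype m] [Fintype n] (A B : Matrix m n ℝ) :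
    ⟪A, B⟫ = ∑ i, ∑ j, A i j * B i j :=
  rfl

theorem finner_eq_inner {m : ℕ} (A : Matrix (Fin m) (Fin m) ℝ) {S : Matrix (Fin m) (Fin m) ℝ}
    (hS : S.IsSymm) : finner A S = ⟪A, S⟫ := by
  simp only [finner, trace, diag_apply, mul_apply, frobenius_inner_def, hS.apply]

theorem IsProjPSD.isNearestPoint {m : ℕ}
    {P : Matrix (Fin m) (Fin m) ℝ → Matrix (Fin m) (Fin m) ℝ} (hP : IsProjPSD P) {Z : Matrix (Fin m) (Fin m) ℝ} (hZ : Z.IsSymm) :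
    IsNearestPoint (posSemidefCone (Fin m)) Z (P Z) :=
  hP Z hZ

/-- If `Q` is differentiable and `ψ(x) = ‖P(Q(x))‖_F²`, then `ψ` is differentiable and
`∇ψ(x) = 2 ∇Q(x)* P(Q(x))`, i.e. `Dψ(x)v = 2⟨∇Q(x)v, P(Q(x))⟩` for every direction `v`. -/
theorem grad_normsq_proj {n m : ℕ}
    (P : Matrix (Fin m) (Fin m) ℝ → Matrix (Fin m) (Fin m) ℝ) (hP : IsProjPSD P)
    (Q : (Fin n → ℝ) → Matrix (Fin m) (Fin m) ℝ) (hQsymm : ∀ x, (Q x).IsSymm)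
    (hQ : Differentiable ℝ Q) :
    Differentiable ℝ (fun x => ‖P (Q x)‖ ^ 2) ∧
      ∀ (x : Fin n → ℝ) (v : Fin n → ℝ),
        fderiv ℝ (fun x => ‖P (Q x)‖ ^ 2) x v = 2 * finner (fderiv ℝ Q x v) (P (Q x)) := by
  have hψ : ∀ x, HasFDerivAt (fun x => ‖P (Q x)‖ ^ 2)
      ((2 : ℝ) • (innerSL ℝ (P (Q x))).comp (fderiv ℝ Q x)) x := fun x =>
    (hQ x).hasFDerivAt.norm_sq_of_isNearestPoint fun y => hP.isNearestPoint (hQsymm y)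
  refine ⟨fun x => (hψ x).differentiableAt, fun x v => ?_⟩
  have hPsymm : (P (Q x)).IsSymm := isHermitian_iff_isSymm.1 (hP (Q x) (hQsymm x)).1.isHermitian
  rw [(hψ x).fderiv, finner_eq_inner _ hPsymm, real_inner_comm]
  rfl
end

section
/- For the closest correlation matrix problem in standard NSDP form, with constraint map G(x) = I + Σ_{1≤i<j≤m} A^{ij} x_{ij} (where A^{ij} has 1 in entries (i,j) and (j,i) and 0 elsewhere), every feasible point x satisfies the nondegeneracy condition: S^m = lin T_{S^m_+}(G(x)) + Im ∇G(x). -/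
/-!
Write `Y = G(x)` and, for symmetric `W`, let `D = diag(W₁₁/2, …, W_mm/2)` and `V = D Y + Y D`.
Since `(I + tD) Y (I + tD)ᵀ = Y + tV + t² D Y D` is positive semidefinite for every real `t`,
both `V` and `-V` are tangent to the PSD cone at `Y`; as `Y` has unit diagonal, `V` has the
diagonal of `W`. Hence `W - V` is symmetric with zero diagonal, i.e. a combination of the
`A^{ij}`. Conversely, tangent vectors to the PSD cone and the `A^{ij}` are symmetric.
-/

open Matrix Pointwise

attribute [local instance] Matrix.frobeniusSeminormedAddCommGroup
  Matrix.frobeniusNormedAddCommGroup Matrix.frobeniusNormedSpace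

/-- `A^{ij}`: the symmetric matrix with `1` in entries `(i,j)` and `(j,i)`, `0` elsewhere. -/
def corA {m : ℕ} (p : {p : Fin m × Fin m // p.1 < p.2}) : Matrix (Fin m) (Fin m) ℝ :=
  Matrix.single p.1.1 p.1.2 1 + Matrix.single p.1.2 p.1.1 1

/-- The constraint map `G(x) = I + Σ_{i<j} A^{ij} x_{ij}` of the closest correlation matrix
problem in standard NSDP form. -/
noncomputable def corG {m : ℕ} (x : {p : Fin m × Fin m // p.1 < p.2} → ℝ) :
    Matrix (Fin m) (Fin m) ℝ :=
  1 + ∑ p, x p • corA p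

theorem tangentConeAt_subset_submodule {𝕜 E : Type*} [Ring 𝕜] [AddCommGroup E] [Module 𝕜 E]
    [TopologicalSpace E] [ContinuousAdd E] {s : Set E} {x : E} {p : Submodule 𝕜 E}
    (hp : IsClosed (p : Set E)) (hs : s ⊆ p) : tangentConeAt 𝕜 s x ⊆ p := by
  intro y hy
  have hx : x ∈ p := hp.closure_subset_iff.2 hs (mem_closure_of_nonempty_tangentConeAt ⟨y, hy⟩)
  obtain ⟨_, _, _, _, d, -, hds, hcd⟩ := exists_fun_of_mem_tangentConeAt hy
  refine hp.mem_of_tendsto hcd (hds.mono fun n hn => p.smul_mem _ ?_)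
  simpa using sub_mem (hs hn) hx

theorem HasDerivAt.mem_tangentConeAt {𝕜 E : Type*} [NontriviallyNormedField 𝕜]
    [NormedAddCommGroup E] [NormedSpace 𝕜 E] {γ : 𝕜 → E} {v : E} {s : Set E}
    (hγ : HasDerivAt γ v 0) (hs : ∀ t, γ t ∈ s) : v ∈ tangentConeAt 𝕜 s (γ 0) := by
  have := hγ.hasFDerivAt.hasFDerivWithinAt (s := Set.univ).mapsTo_tangent_cone
    (by simp : (1 : 𝕜) ∈ tangentConeAt 𝕜 Set.univ 0)
  simp only [ContinuousLinearMap.toSpanSingleton_apply, one_smul, Set.image_univ] at this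
  exact tangentConeAt_mono (Set.range_subset_iff.2 hs) this

namespace Matrix

def symmetricSubmodule (n R : Type*) [Semiring R] : Submodule R (Matrix n n R) where
  carrier := {A | A.IsSymm}
  add_mem' := IsSymm.add
  zero_mem' := isSymm_zero
  smul_mem' c _ h := h.smul c

theorem isClosed_symmetricSubmodule {n R : Type*} [Semiring R] [TopologicalSpace R]
    [T2Space R] :
    IsClosed (symmetricSubmodule n R : Set (Matrix n n R)) :=
  isClosed_eq continuous_id.matrix_transpose continuous_id

theorem tangentConeAt_posSemidef_subset_isSymm {n : Type*} [Fintype n] (Y : Matrix n n ℝ) :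
    tangentConeAt ℝ {A : Matrix n n ℝ | A.PosSemidef} Y ⊆ {W | W.IsSymm} :=
  tangentConeAt_subset_submodule (p := symmetricSubmodule n ℝ) isClosed_symmetricSubmodule
    fun _ hA => hA.isHermitian

theorem PosSemidef.mul_add_mul_transpose_mem_tangentConeAt {n : Type*} [Fintype n]
    {Y : Matrix n n ℝ} (hY : Y.PosSemidef) (M : Matrix n n ℝ) :
    M * Y + Y * Mᵀ ∈ tangentConeAt ℝ {A : Matrix n n ℝ | A.PosSemidef} Y := by
  classical
  have hγ := (((hasDerivAt_id' (0 : ℝ)).smul_const (M * Y + Y * Mᵀ)).const_add Y).add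
    ((hasDerivAt_pow 2 (0 : ℝ)).smul_const (M * Y * Mᵀ))
  have hcurve (t : ℝ) :
      Y + t • (M * Y + Y * Mᵀ) + t ^ 2 • (M * Y * Mᵀ) = (1 + t • M) * Y * (1 + t • M)ᴴ := by
    simp only [conjTranspose_eq_transpose_of_trivial, transpose_add, transpose_one,
      transpose_smul, Matrix.add_mul, Matrix.mul_add, Matrix.one_mul, Matrix.mul_one,
      Matrix.smul_mul, Matrix.mul_smul]
    module
  have := hγ.mem_tangentConeAt (s := {A : Matrix n n ℝ | A.PosSemidef}) fun t => by
    rw [Pi.add_apply, hcurve]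
    exact hY.mul_mul_conjTranspose_same _
  norm_num at this
  -- `this` is stated with the Frobenius instances, defeq but not syntactically equal to the
  -- ones in the goal, so `simpa` would fail where `exact` succeeds.
  exact this

theorem PosSemidef.exists_mem_tangentConeAt_diag_eq {n : Type*} [Fintype n] [DecidableEq n]
    {Y : Matrix n n ℝ} (hY : Y.PosSemidef) (hdiag : ∀ i, Y i i = 1) (d : n → ℝ) :
    ∃ V, V ∈ tangentConeAt ℝ {A : Matrix n n ℝ | A.PosSemidef} Y ∧
      -V ∈ tangentConeAt ℝ {A : Matrix n n ℝ | A.PosSemidef} Y ∧ V.diag = d := by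
  set D := diagonal fun i => d i / 2
  refine ⟨D * Y + Y * Dᵀ, hY.mul_add_mul_transpose_mem_tangentConeAt D, ?_, ?_⟩
  · have h := hY.mul_add_mul_transpose_mem_tangentConeAt (-D)
    rwa [transpose_neg, Matrix.neg_mul, Matrix.mul_neg, ← neg_add] at h
  · ext i
    simp [D, hdiag]

end Matrix

section

variable {m : ℕ}

theorem sum_smul_corA_apply (x : {p : Fin m × Fin m // p.1 < p.2} → ℝ) (i j : Fin m) :
    (∑ p, x p • corA p) i j =
      (if h : i < j then x ⟨(i, j), h⟩ else 0) + (if h : j < i then x ⟨(j, i), h⟩ else 0) := by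
  set T := ∑ p : {p : Fin m × Fin m // p.1 < p.2}, x p • single p.1.1 p.1.2 (1 : ℝ)
  have hT (a b : Fin m) : T a b = if h : a < b then x ⟨(a, b), h⟩ else 0 := by
    simp only [T, Matrix.sum_apply, Matrix.smul_apply, single_apply, smul_eq_mul, mul_ite,
      mul_one, mul_zero]
    split_ifs with h
    · refine (Fintype.sum_eq_single ⟨(a, b), h⟩ fun p hp => if_neg ?_).trans (by simp)
      rintro ⟨rfl, rfl⟩
      exact hp rfl
    · refine Finset.sum_eq_zero fun p _ => if_neg ?_
      rintro ⟨rfl, rfl⟩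
      exact h p.2
  have hsum : ∑ p, x p • corA p = T + Tᵀ := by
    simp only [T, corA, smul_add, Finset.sum_add_distrib, transpose_sum, transpose_smul,
      transpose_single]
  rw [hsum, Matrix.add_apply, transpose_apply, hT, hT]

theorem corG_apply_self (x : {p : Fin m × Fin m // p.1 < p.2} → ℝ) (i : Fin m) :
    corG x i i = 1 := by
  simp [corG, sum_smul_corA_apply]

theorem mem_span_corA {W : Matrix (Fin m) (Fin m) ℝ} (hW : W.IsSymm) (hdiag : ∀ i, W i i = 0) :
    W ∈ Submodule.span ℝ (Set.range (corA (m := m))) := by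
  have : W = ∑ p, W p.1.1 p.1.2 • corA p := by
    ext i j
    rw [sum_smul_corA_apply]
    rcases lt_trichotomy i j with h | rfl | h
    · simp [h, h.not_gt]
    · simp [hdiag]
    · simp [h, h.not_gt, hW.apply i j]
  rw [this]
  exact Submodule.sum_mem _ fun p _ => Submodule.smul_mem _ _ (Submodule.subset_span ⟨p, rfl⟩)

theorem span_corA_le_symmetricSubmodule :
    Submodule.span ℝ (Set.range (corA (m := m))) ≤ symmetricSubmodule (Fin m) ℝ := by
  rw [Submodule.span_le]
  rintro _ ⟨p, rfl⟩
  simp [corA, symmetricSubmodule, IsSymm, transpose_add, add_comm]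

end

/-- Nondegeneracy for the closest correlation matrix problem: at every feasible `x`,
`S^m = lin T_{S^m_+}(G(x)) + Im ∇G(x)`, where `Im ∇G(x)` is the span of the `A^{ij}`. -/
theorem correlation_nondegenerate {m : ℕ}
    (x : {p : Fin m × Fin m // p.1 < p.2} → ℝ) (hfeas : (corG x).PosSemidef) :
    {W : Matrix (Fin m) (Fin m) ℝ | W.IsSymm} =
      (tangentConeAt ℝ {A : Matrix (Fin m) (Fin m) ℝ | A.PosSemidef} (corG x) ∩
          {A | -A ∈ tangentConeAt ℝ {A : Matrix (Fin m) (Fin m) ℝ | A.PosSemidef} (corG x)}) +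
        (Submodule.span ℝ (Set.range (corA (m := m))) :
          Set (Matrix (Fin m) (Fin m) ℝ)) := by
  ext W
  constructor
  · intro hW
    obtain ⟨V, hV, hnegV, hVW⟩ :=
      hfeas.exists_mem_tangentConeAt_diag_eq (corG_apply_self x) W.diag
    have hWV : W - V ∈ Submodule.span ℝ (Set.range (corA (m := m))) :=
      mem_span_corA (hW.sub (tangentConeAt_posSemidef_subset_isSymm _ hV))
        fun i => sub_eq_zero.2 (congrFun hVW i).symm
    exact ⟨V, ⟨hV, hnegV⟩, W - V, hWV, add_sub_cancel V W⟩
  · rintro ⟨U, ⟨hU, -⟩, V, hV, rfl⟩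
    exact (tangentConeAt_posSemidef_subset_isSymm _ hU).add (span_corA_le_symmetricSubmodule hV)
end
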